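/- Let r ≥ 1 be an integer and let p₁, …, p_r be positive integers. Let N = 1 + Σᵢ (pᵢ − 1), and let M be the symmetric N × N integer matrix indexed by a central index c together with indices (i,j) for 1 ≤ i ≤ r and 1 ≤ j ≤ pᵢ − 1, defined by: M(c,c) = −r; M((i,j),(i,j)) = −2 for all i, j; M(c,(i,1)) = M((i,1),c) = 1 for every i with pᵢ ≥ 2; M((i,j),(i,j+1)) = M((i,j+1),(i,j)) = 1 for 1 ≤ j ≤ pᵢ − 2; and all other entries equal to 0. Then M, viewed as a real symmetric matrix, is negative definite; i.e., xᵀ M x < 0 for every nonzero vector x ∈ ℝ^N. -/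

import Mathlib

/-!
Write `g i = legValue x i` for the values of `x` along the chain formed by the centre, the
`i`-th leg and a final `0`. At a leg vertex, `M x` is the second difference of `g i`, and the
centre row contributes `g i 0 * (g i 1 - g i 0)` to each leg, since the centre has weight `-r`.
Summation by parts then gives `xᵀ M x = -∑ i, ∑ k, (g i k - g i (k + 1)) ^ 2`. If this
vanishes, every `g i` is constant, hence `0` because it ends in `0`. As `r ≥ 1`, the centre lies
on some leg, so `x = 0`.
-/

/-- The intersection matrix of the star-shaped plumbing graph with a central
vertex of weight `-r` and `r` legs, where the `i`-th leg is a chain of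
`p i - 1` vertices each of weight `-2`.  The index `none` is the central
vertex `c`, and `some ⟨i, j⟩` is the `(j+1)`-st vertex of the `i`-th leg
(so `j = 0` corresponds to the vertex of the leg adjacent to the center). -/
def plumbingMatrix (r : ℕ) (p : Fin r → ℕ) :
    Matrix (Option ((i : Fin r) × Fin (p i - 1)))
      (Option ((i : Fin r) × Fin (p i - 1))) ℤ :=
  fun u v =>
    match u, v with
    | none, none => -(r : ℤ)
    | none, some ⟨_, j⟩ => if (j : ℕ) = 0 then 1 else 0
    | some ⟨_, j⟩, none => if (j : ℕ) = 0 then 1 else 0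
    | some ⟨i, j⟩, some ⟨i', j'⟩ =>
        if i = i' then
          (if (j : ℕ) = (j' : ℕ) then -2
           else if (j : ℕ) + 1 = (j' : ℕ) ∨ (j' : ℕ) + 1 = (j : ℕ) then 1
           else 0)
        else 0

open Finset Matrix

theorem sum_range_mul_secondDiff {R : Type*} [CommRing R] (g : ℕ → R) (n : ℕ) :
    g 0 * (g 1 - g 0) + ∑ k ∈ range n, g (k + 1) * (g k - 2 * g (k + 1) + g (k + 2)) =
      -∑ k ∈ range (n + 1), (g k - g (k + 1)) ^ 2 + g (n + 1) * (g (n + 1) - g n) := by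
  induction n with
  | zero => simp only [range_zero, sum_empty, zero_add, sum_range_one]; ring
  | succ n ih => rw [sum_range_succ, ← add_assoc, ih, sum_range_succ _ (n + 1)]; ring

theorem sum_range_sq_sub_succ_pos {R : Type*} [CommRing R] [LinearOrder R]
    [IsStrictOrderedRing R] {g : ℕ → R} {n k : ℕ} (hg : g (n + 1) = 0) (hk : k ≤ n + 1)
    (hgk : g k ≠ 0) : 0 < ∑ j ∈ range (n + 1), (g j - g (j + 1)) ^ 2 := by
  refine (sum_nonneg fun _ _ => sq_nonneg _).lt_of_ne fun h => hgk ?_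
  have hstep : ∀ j ≤ n, g (j + 1) = g j := fun j hj =>
    (sub_eq_zero.1 <| pow_eq_zero_iff two_ne_zero |>.1 <|
      (sum_eq_zero_iff_of_nonneg fun _ _ => sq_nonneg _).1 h.symm j (mem_range.2 (by omega))).symm
  have hconst : ∀ j ≤ n + 1, g j = g 0 := by
    intro j hj
    induction j with
    | zero => rfl
    | succ j ih => rw [hstep j (by omega), ih (by omega)]
  rw [hconst k hk, ← hconst (n + 1) le_rfl, hg]

theorem tridiagonal_row_sum {R : Type*} [CommRing R] (g : ℕ → R) {n j : ℕ} (hj : j < n)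
    (hg : g (n + 1) = 0) :
    (if j = 0 then g 0 else 0) + ∑ k ∈ range n,
      (if j = k then -2 else if j + 1 = k ∨ k + 1 = j then 1 else 0) * g (k + 1) =
    g j - 2 * g (j + 1) + g (j + 2) := by
  have hsplit : ∀ k,
      (if j = k then (-2 : R) else if j + 1 = k ∨ k + 1 = j then 1 else 0) * g (k + 1) =
      (if k = j then -2 * g (j + 1) else 0) + (if k = j + 1 then g (j + 2) else 0) +
        (if k + 1 = j then g j else 0) := by
    intro k
    split_ifs <;> first | omega | (subst_vars; ring)
  rw [sum_congr rfl fun k _ => hsplit k, sum_add_distrib, sum_add_distrib, sum_ite_eq',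
    sum_ite_eq', if_pos (mem_range.2 hj)]
  have hnext : (if j + 1 ∈ range n then g (j + 2) else 0) = g (j + 2) := by
    split_ifs with h
    · rfl
    · rw [show j + 2 = n + 1 by simp at h; omega, hg]
  rw [hnext]
  rcases j with _ | j
  · simp only [↓reduceIte, Nat.add_one_ne_zero, sum_const_zero]; ring
  · simp only [add_left_inj, sum_ite_eq', mem_range, if_neg (Nat.succ_ne_zero j)]
    rw [if_pos (by omega)]
    ring

section LegValue

variable {ι α : Type*} [Zero α] {n : ι → ℕ}

def legValue (x : Option ((i : ι) × Fin (n i)) → α) (i : ι) : ℕ → α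
  | 0 => x none
  | k + 1 => if h : k < n i then x (some ⟨i, ⟨k, h⟩⟩) else 0

variable (x : Option ((i : ι) × Fin (n i)) → α) (i : ι)

@[simp]
theorem legValue_zero : legValue x i 0 = x none := rfl

@[simp]
theorem legValue_succ_fin (j : Fin (n i)) : legValue x i (j + 1) = x (some ⟨i, j⟩) :=
  dif_pos j.isLt

theorem legValue_succ_of_le {k : ℕ} (hk : n i ≤ k) : legValue x i (k + 1) = 0 :=
  dif_neg hk.not_gt

theorem sum_fin_eq_sum_range_legValue {β : Type*} [AddCommMonoid β] (f : α → ℕ → β) :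
    ∑ j : Fin (n i), f (x (some ⟨i, j⟩)) j = ∑ k ∈ range (n i), f (legValue x i (k + 1)) k := by
  simp only [← legValue_succ_fin x i]
  exact Fin.sum_univ_eq_sum_range (fun k => f (legValue x i (k + 1)) k) (n i)

theorem exists_legValue_ne_zero [Nonempty ι] {x : Option ((i : ι) × Fin (n i)) → α} (hx : x ≠ 0) :
    ∃ i, ∃ k ≤ n i, legValue x i k ≠ 0 := by
  obtain ⟨u, hu⟩ := Function.ne_iff.1 hx
  rcases u with _ | ⟨i, j⟩
  · exact ⟨Classical.arbitrary ι, 0, Nat.zero_le _, hu⟩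
  · exact ⟨i, j + 1, j.isLt, by rwa [legValue_succ_fin]⟩

end LegValue

section PlumbingMatrix

variable {r : ℕ} {p : Fin r → ℕ} (x : Option ((i : Fin r) × Fin (p i - 1)) → ℝ)

theorem plumbingMatrix_mulVec_none :
    ((plumbingMatrix r p).map (Int.cast : ℤ → ℝ) *ᵥ x) none =
      -r * x none + ∑ i, legValue x i 1 := by
  simp only [Matrix.mulVec, dotProduct, Fintype.sum_option, Fintype.sum_sigma, Matrix.map_apply]
  simp only [plumbingMatrix, apply_ite (Int.cast : ℤ → ℝ), Int.cast_one, Int.cast_zero,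
    Int.cast_neg, Int.cast_natCast]
  congr 1
  refine sum_congr rfl fun i _ => ?_
  rw [sum_fin_eq_sum_range_legValue x i fun a k => (if k = 0 then 1 else 0) * a]
  simp only [ite_mul, one_mul, zero_mul, sum_ite_eq', mem_range]
  split_ifs with h
  · rfl
  · rw [legValue_succ_of_le x i (by omega)]

theorem plumbingMatrix_mulVec_some (i : Fin r) (j : Fin (p i - 1)) :
    ((plumbingMatrix r p).map (Int.cast : ℤ → ℝ) *ᵥ x) (some ⟨i, j⟩) =
      legValue x i j - 2 * legValue x i (j + 1) + legValue x i (j + 2) := by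
  simp only [Matrix.mulVec, dotProduct, Fintype.sum_option, Fintype.sum_sigma, Matrix.map_apply]
  simp only [plumbingMatrix, apply_ite (Int.cast : ℤ → ℝ), Int.cast_one, Int.cast_zero,
    Int.cast_neg, Int.cast_ofNat]
  rw [Fintype.sum_eq_single i fun i' hi' => by simp [Ne.symm hi']]
  simp only [↓reduceIte]
  rw [sum_fin_eq_sum_range_legValue x i fun a k =>
    (if (j : ℕ) = k then -2 else if (j : ℕ) + 1 = k ∨ k + 1 = j then 1 else 0) * a,
    ← legValue_zero x i, ite_mul, one_mul, zero_mul]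
  exact tridiagonal_row_sum (legValue x i) j.isLt (legValue_succ_of_le x i le_rfl)

theorem plumbingMatrix_dotProduct_mulVec :
    x ⬝ᵥ ((plumbingMatrix r p).map (Int.cast : ℤ → ℝ) *ᵥ x) =
      -∑ i, ∑ k ∈ range (p i - 1 + 1), (legValue x i k - legValue x i (k + 1)) ^ 2 := by
  have hcentre : x none * (-r * x none + ∑ i, legValue x i 1) =
      ∑ i, legValue x i 0 * (legValue x i 1 - legValue x i 0) := by
    simp only [legValue_zero, mul_sub, sum_sub_distrib, ← mul_sum, sum_const, card_univ,
      Fintype.card_fin, nsmul_eq_mul]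
    ring
  rw [dotProduct, Fintype.sum_option, Fintype.sum_sigma, plumbingMatrix_mulVec_none, hcentre,
    ← sum_neg_distrib, ← sum_add_distrib]
  refine sum_congr rfl fun i _ => ?_
  simp only [plumbingMatrix_mulVec_some]
  rw [sum_fin_eq_sum_range_legValue x i fun a k =>
      a * (legValue x i k - 2 * legValue x i (k + 1) + legValue x i (k + 2)),
    sum_range_mul_secondDiff, legValue_succ_of_le x i le_rfl, zero_mul, add_zero]

end PlumbingMatrix

theorem plumbingMatrix_negDef_general (r : ℕ) (hr : 1 ≤ r) (p : Fin r → ℕ) :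
    ∀ x : Option ((i : Fin r) × Fin (p i - 1)) → ℝ, x ≠ 0 →
      dotProduct x
        (Matrix.mulVec ((plumbingMatrix r p).map (fun a : ℤ => (a : ℝ))) x) < 0 := by
  intro x hx
  have : Nonempty (Fin r) := Fin.pos_iff_nonempty.1 hr
  obtain ⟨i, k, hk, hxk⟩ := exists_legValue_ne_zero hx
  rw [plumbingMatrix_dotProduct_mulVec, neg_lt_zero]
  exact sum_pos' (fun i _ => sum_nonneg fun _ _ => sq_nonneg _)
    ⟨i, mem_univ i, sum_range_sq_sub_succ_pos (legValue_succ_of_le x i le_rfl) (by omega) hxk⟩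

/-- The plumbing matrix of the star-shaped graph with central weight `-r` and
`r` legs of `p i - 1` vertices of weight `-2`, viewed as a real symmetric
matrix, is negative definite: `xᵀ M x < 0` for every nonzero real vector `x`. -/
theorem plumbingMatrix_negDef (r : ℕ) (hr : 1 ≤ r) (p : Fin r → ℕ)
    (hp : ∀ i, 1 ≤ p i) :
    ∀ x : Option ((i : Fin r) × Fin (p i - 1)) → ℝ, x ≠ 0 →
      dotProduct x
        (Matrix.mulVec ((plumbingMatrix r p).map (fun a : ℤ => (a : ℝ))) x) < 0 :=
  plumbingMatrix_negDef_general r hr p
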